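/- arXiv:1907.06712 — 2 statements merged into one kernel-verified Lean document; each statement's English description precedes it below -/
import Mathlib

section
/- Let π : E → B be a principal G-bundle with E, B, F locally compact Hausdorff and B second countable. Given a σ-finite Baire measure μ_B on B and a G-invariant finite Baire measure ν on the fiber F, there is at most one Baire measure μ_E on E such that for every local trivialization ψ over an open set U ⊂ B, the pushforward ψ_*(μ_E restricted to π^{-1}(U)) equals the product measure ν × μ_B|_U. -/
/-!
Uniqueness is local. Since `B` is second countable, the product σ-algebra on `U b × F` is the
Borel one, so each trivialization `ψ b` is a measurable equivalence and its pushforward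
determines the restriction of the measure to the chart `π⁻¹(U b)`; countably many charts
cover `E` because `B` is Lindelöf.
-/

open MeasureTheory

namespace MeasureTheory.Measure

theorem restrict_eq_of_comap_subtype_val_eq {α : Type*} [MeasurableSpace α] {μ ν : Measure α}
    {s : Set α} (hs : MeasurableSet s)
    (h : comap Subtype.val μ = comap (Subtype.val : s → α) ν) :
    μ.restrict s = ν.restrict s := by
  rw [← map_comap_subtype_coe hs μ, ← map_comap_subtype_coe hs ν, h]

theorem ext_of_comap_subtype_val_preimage_eq {X Y : Type*} [TopologicalSpace X]
    [MeasurableSpace X] [OpensMeasurableSpace X] [TopologicalSpace Y] [LindelofSpace Y]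
    {π : X → Y} (hπ : Continuous π) {U : Y → Set Y} (hUopen : ∀ y, IsOpen (U y))
    (hUmem : ∀ y, y ∈ U y) {μ ν : Measure X}
    (h : ∀ y, comap Subtype.val μ = comap (Subtype.val : π ⁻¹' U y → X) ν) :
    μ = ν := by
  obtain ⟨T, hTc, hTcov⟩ := countable_cover_nhds fun y => (hUopen y).mem_nhds (hUmem y)
  have hcov : ⋃ y ∈ T, π ⁻¹' U y = Set.univ := by
    rw [← Set.preimage_iUnion₂, hTcov, Set.preimage_univ]
  exact ext_of_biUnion_eq_univ hTc hcov fun y _ =>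
    restrict_eq_of_comap_subtype_val_eq ((hUopen y).preimage hπ).measurableSet (h y)

end MeasureTheory.Measure

theorem stmt4_general {E B F : Type*} [TopologicalSpace E] [TopologicalSpace B] [TopologicalSpace F]
    [SecondCountableTopology B]
    [MeasurableSpace E] [BorelSpace E] [MeasurableSpace B] [BorelSpace B]
    [MeasurableSpace F] [BorelSpace F]
    (π : E → B) (hπ : Continuous π)
    (μB : Measure B)
    (ν : Measure F)
    (U : B → Set B) (hUopen : ∀ b, IsOpen (U b)) (hUmem : ∀ b, b ∈ U b)
    (ψ : ∀ b : B, ↥(π ⁻¹' (U b)) ≃ₜ (↥(U b) × F))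
    (μ μ' : Measure E)
    (hμ : ∀ b : B, Measure.map (ψ b) (Measure.comap Subtype.val μ) =
      (Measure.comap Subtype.val μB).prod ν)
    (hμ' : ∀ b : B, Measure.map (ψ b) (Measure.comap Subtype.val μ') =
      (Measure.comap Subtype.val μB).prod ν) :
    μ = μ' :=
  Measure.ext_of_comap_subtype_val_preimage_eq hπ hUopen hUmem fun b =>
    (ψ b).toMeasurableEquiv.map_measurableEquiv_injective ((hμ b).trans (hμ' b).symm)

/-- Uniqueness of the product measure on the total space of a principal bundle.
Let `π : E → B` be a principal `G`-bundle (encoded by a family of local trivializations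
`ψ b : π⁻¹(U b) ≃ₜ U b × F` over an open cover `U`), with `E`, `B`, `F` locally compact
Hausdorff and `B` second countable. Given a σ-finite Borel (= Baire) measure `μB` on `B`
and a `G`-invariant finite measure `ν` on the fiber `F`, there is at most one measure on
`E` whose image under every local trivialization is the product measure `μB × ν`. -/
theorem stmt4 {E B F : Type*} [TopologicalSpace E] [TopologicalSpace B] [TopologicalSpace F]
    [LocallyCompactSpace E] [T2Space E]
    [LocallyCompactSpace B] [T2Space B] [SecondCountableTopology B]
    [LocallyCompactSpace F] [T2Space F]
    [MeasurableSpace E] [BorelSpace E] [MeasurableSpace B] [BorelSpace B]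
    [MeasurableSpace F] [BorelSpace F]
    (G : Type*) [Group G] [MulAction G F]
    (π : E → B) (hπ : Continuous π)
    (μB : Measure B) [SigmaFinite μB]
    (ν : Measure F) [IsFiniteMeasure ν]
    (hinv : ∀ (g : G) (s : Set F), MeasurableSet s → ν ((g • ·) ⁻¹' s) = ν s)
    (U : B → Set B) (hUopen : ∀ b, IsOpen (U b)) (hUmem : ∀ b, b ∈ U b)
    (ψ : ∀ b : B, ↥(π ⁻¹' (U b)) ≃ₜ (↥(U b) × F))
    (hψ : ∀ (b : B) (x : ↥(π ⁻¹' (U b))), ((ψ b x).1 : B) = π (x : E))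
    (μ μ' : Measure E)
    (hμ : ∀ b : B, Measure.map (ψ b) (Measure.comap Subtype.val μ) =
      (Measure.comap Subtype.val μB).prod ν)
    (hμ' : ∀ b : B, Measure.map (ψ b) (Measure.comap Subtype.val μ') =
      (Measure.comap Subtype.val μB).prod ν) :
    μ = μ' :=
  stmt4_general π hπ μB ν U hUopen hUmem ψ μ μ' hμ hμ'
end

section
/- If each covering map in a sequence of locally compact abelian topological groups is a continuous group homomorphism, then the inverse limit is a locally compact abelian topological group, and the product measure constructed from a Haar measure on X_1 and the unit-volume Haar measure on the profinite fiber group is a Haar measure on the inverse limit. -/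
/-!
Let `φ : S → X 0` be the projection to the first coordinate. Each `P i` is an open surjection with
finite kernel, so `P i ⁻¹' C ⊆ ker (P i) * W` for some compact `W`: preimages of compact sets are
compact. Hence `φ ⁻¹' C` is a closed subset of the product of the iterated preimages of `C`, so `φ`
has compact preimages of compact sets; this makes `S` locally compact and `ker φ` compact.

A `ker φ`-invariant probability measure carried by the fibre `φ ⁻¹' {y} = ker φ * w` pulls back to
a left-invariant probability measure on the compact group `ker φ`, which is unique. So the left
translate of `ν x` by `g` is `ν (φ g * x)`, and left invariance of `μinf` follows from that of
`μ1`. Finally `μinf (φ ⁻¹' C) = μ1 C`, so a compact neighbourhood `φ ⁻¹' C` of `1` has positive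
finite measure.
-/

open MeasureTheory Measure Topology Set
open scoped Pointwise

section CompactPreimage

variable {X Y : Type*} [TopologicalSpace X] [TopologicalSpace Y]

theorem IsOpenMap.exists_isCompact_subset_image [WeaklyLocallyCompactSpace X] {f : X → Y}
    (hf : IsOpenMap f) (hsurj : Function.Surjective f) {C : Set Y} (hC : IsCompact C) :
    ∃ W, IsCompact W ∧ C ⊆ f '' W := by
  choose V hVc hVn using fun x : X => exists_compact_mem_nhds x
  obtain ⟨t, ht⟩ := hC.elim_finite_subcover (fun x => f '' interior (V x))
    (fun x => hf _ isOpen_interior) fun y _ => by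
      obtain ⟨x, rfl⟩ := hsurj y
      exact mem_iUnion.2 ⟨x, mem_image_of_mem f (mem_interior_iff_mem_nhds.2 (hVn x))⟩
  refine ⟨⋃ x ∈ t, V x, t.finite_toSet.isCompact_biUnion fun x _ => hVc x, ?_⟩
  rw [image_iUnion₂]
  exact ht.trans (iUnion₂_mono fun x _ => image_mono interior_subset)

theorem weaklyLocallyCompactSpace_of_isCompact_preimage [WeaklyLocallyCompactSpace Y]
    {f : X → Y} (hf : Continuous f) (hfK : ∀ K, IsCompact K → IsCompact (f ⁻¹' K)) :
    WeaklyLocallyCompactSpace X where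
  exists_compact_mem_nhds x :=
    let ⟨K, hK, hKx⟩ := exists_compact_mem_nhds (f x)
    ⟨f ⁻¹' K, hfK K hK, hf.continuousAt hKx⟩

end CompactPreimage

theorem MonoidHom.isCompact_preimage_of_isOpenMap {G H : Type*} [Group G] [TopologicalSpace G]
    [ContinuousMul G] [WeaklyLocallyCompactSpace G] [Group H] [TopologicalSpace H] [T2Space H]
    (f : G →* H) (hf : Continuous f) (hopen : IsOpenMap f) (hsurj : Function.Surjective f)
    (hker : IsCompact (f.ker : Set G)) {C : Set H} (hC : IsCompact C) :
    IsCompact (f ⁻¹' C) := by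
  obtain ⟨W, hW, hCW⟩ := hopen.exists_isCompact_subset_image hsurj hC
  refine (hker.mul hW).of_isClosed_subset (hC.isClosed.preimage hf) fun x hx => ?_
  obtain ⟨w, hw, hwx⟩ := hCW hx
  exact ⟨x * w⁻¹, by simp [MonoidHom.mem_ker, hwx], w, hw, by simp⟩

section InverseLimit

variable {X : ℕ → Type*}

def preimageTower (f : ∀ i, X (i + 1) → X i) (C : Set (X 0)) : ∀ i, Set (X i)
  | 0 => C
  | i + 1 => f i ⁻¹' preimageTower f C i

theorem mem_preimageTower {f : ∀ i, X (i + 1) → X i} {C : Set (X 0)} {x : ∀ i, X i}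
    (hx : ∀ i, f i (x (i + 1)) = x i) (h0 : x 0 ∈ C) : ∀ i, x i ∈ preimageTower f C i
  | 0 => h0
  | i + 1 => by
    change f i (x (i + 1)) ∈ preimageTower f C i
    rw [hx i]
    exact mem_preimageTower hx h0 i

variable [∀ i, TopologicalSpace (X i)]

theorem isCompact_preimageTower {f : ∀ i, X (i + 1) → X i}
    (hf : ∀ i K, IsCompact K → IsCompact (f i ⁻¹' K)) {C : Set (X 0)} (hC : IsCompact C) :
    ∀ i, IsCompact (preimageTower f C i)
  | 0 => hC
  | i + 1 => hf i _ (isCompact_preimageTower hf hC i)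

theorem isCompact_setOf_compatible_apply_zero_mem [∀ i, T2Space (X i)]
    {f : ∀ i, X (i + 1) → X i} (hfc : ∀ i, Continuous (f i))
    (hf : ∀ i K, IsCompact K → IsCompact (f i ⁻¹' K)) {C : Set (X 0)} (hC : IsCompact C) :
    IsCompact {x : ∀ i, X i | (∀ i, f i (x (i + 1)) = x i) ∧ x 0 ∈ C} := by
  have hclosed : IsClosed {x : ∀ i, X i | (∀ i, f i (x (i + 1)) = x i) ∧ x 0 ∈ C} := by
    rw [ofPred_and, ofPred_forall]
    exact (isClosed_iInter fun i => isClosed_eq ((hfc i).comp (continuous_apply _))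
      (continuous_apply i)).inter (hC.isClosed.preimage (continuous_apply 0))
  exact (isCompact_univ_pi (isCompact_preimageTower hf hC)).of_isClosed_subset hclosed
    fun x hx i _ => mem_preimageTower hx.1 hx.2 i

end InverseLimit

theorem eq_of_isMulLeftInvariant_of_compactSpace {K : Type*} [Group K] [TopologicalSpace K]
    [IsTopologicalGroup K] [CompactSpace K] [MeasurableSpace K] [BorelSpace K]
    (μ ν : Measure K) [IsProbabilityMeasure μ] [IsProbabilityMeasure ν]
    [μ.IsMulLeftInvariant] [ν.IsMulLeftInvariant] : μ = ν := by
  have hμ := isMulInvariant_eq_smul_of_compactSpace μ (haar : Measure K)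
  have hν := isMulInvariant_eq_smul_of_compactSpace ν (haar : Measure K)
  have hμ1 := congrArg (· univ) hμ
  have hν1 := congrArg (· univ) hν
  simp only [measure_univ, Measure.smul_apply, ENNReal.smul_def, smul_eq_mul] at hμ1 hν1
  rw [hμ, hν, ENNReal.coe_injective ((ENNReal.mul_left_inj
    (measure_univ_ne_zero.2 (NeZero.ne _)) (measure_ne_top _ _)).1 (hμ1.symm.trans hν1))]

section CosetMeasures

variable {G : Type*} [Group G] [TopologicalSpace G] [IsTopologicalGroup G] [MeasurableSpace G]
  [BorelSpace G] {K : Subgroup G}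

theorem Subgroup.measurableEmbedding_mul_right (hK : IsClosed (K : Set G)) (w : G) :
    MeasurableEmbedding fun k : K => (k : G) * w :=
  ((Homeomorph.mulRight w).isClosedEmbedding.comp
    hK.isClosedEmbedding_subtypeVal).measurableEmbedding

theorem Subgroup.map_comap_mul_right (hK : IsClosed (K : Set G)) {w : G} {μ : Measure G}
    (hμ : ∀ᵐ z ∂μ, z * w⁻¹ ∈ K) :
    (μ.comap fun k : K => (k : G) * w).map (fun k : K => (k : G) * w) = μ := by
  rw [(measurableEmbedding_mul_right hK w).map_comap]
  exact restrict_eq_self_of_ae_mem (hμ.mono fun z hz => ⟨⟨z * w⁻¹, hz⟩, by simp⟩)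

theorem Subgroup.isProbabilityMeasure_comap_mul_right (hK : IsClosed (K : Set G)) {w : G}
    {μ : Measure G} [IsProbabilityMeasure μ] (hμ : ∀ᵐ z ∂μ, z * w⁻¹ ∈ K) :
    IsProbabilityMeasure (μ.comap fun k : K => (k : G) * w) := by
  constructor
  simpa [map_apply (measurableEmbedding_mul_right hK w).measurable MeasurableSet.univ]
    using congrArg (· univ) (map_comap_mul_right hK hμ)

theorem Subgroup.isMulLeftInvariant_comap_mul_right (hK : IsClosed (K : Set G)) {w : G}
    {μ : Measure G} (hμ : ∀ᵐ z ∂μ, z * w⁻¹ ∈ K) (hμK : ∀ k ∈ K, μ.map (k * ·) = μ) :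
    (μ.comap fun k : K => (k : G) * w).IsMulLeftInvariant := by
  have he := measurableEmbedding_mul_right hK w
  refine ⟨fun k => he.map_injective ?_⟩
  have hcomm : (fun k : K => (k : G) * w) ∘ (k * ·) = ((k : G) * ·) ∘ fun k : K => (k : G) * w :=
    funext fun x => by simp [mul_assoc]
  rw [Measure.map_map he.measurable (measurable_const_mul k), hcomm,
    ← Measure.map_map (measurable_const_mul (k : G)) he.measurable, map_comap_mul_right hK hμ,
    hμK k k.2]

theorem Subgroup.eq_of_ae_mul_inv_mem (hKc : IsCompact (K : Set G)) (hK : IsClosed (K : Set G))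
    {w : G} {μ ν : Measure G} [IsProbabilityMeasure μ] [IsProbabilityMeasure ν]
    (hμ : ∀ᵐ z ∂μ, z * w⁻¹ ∈ K) (hν : ∀ᵐ z ∂ν, z * w⁻¹ ∈ K)
    (hμK : ∀ k ∈ K, μ.map (k * ·) = μ) (hνK : ∀ k ∈ K, ν.map (k * ·) = ν) : μ = ν := by
  have := isCompact_iff_compactSpace.mp hKc
  have := isProbabilityMeasure_comap_mul_right hK hμ
  have := isProbabilityMeasure_comap_mul_right hK hν
  have := isMulLeftInvariant_comap_mul_right hK hμ hμK
  have := isMulLeftInvariant_comap_mul_right hK hν hνK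
  rw [← map_comap_mul_right hK hμ, ← map_comap_mul_right hK hν,
    eq_of_isMulLeftInvariant_of_compactSpace (μ.comap fun k : K => (k : G) * w)
      (ν.comap fun k : K => (k : G) * w)]

theorem MonoidHom.measure_eq_of_measure_fiber_eq_one {H : Type*} [Group H] [TopologicalSpace H]
    [T1Space H] (φ : G →* H) (hφ : Continuous φ) (hker : IsCompact (φ.ker : Set G)) {y : H}
    {μ ν : Measure G} [IsProbabilityMeasure μ] [IsProbabilityMeasure ν]
    (hμ : μ (φ ⁻¹' {y}) = 1) (hν : ν (φ ⁻¹' {y}) = 1)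
    (hμK : ∀ k ∈ φ.ker, μ.map (k * ·) = μ) (hνK : ∀ k ∈ φ.ker, ν.map (k * ·) = ν) : μ = ν := by
  have hfiber : MeasurableSet (φ ⁻¹' {y}) := (isClosed_singleton.preimage hφ).measurableSet
  obtain ⟨w, hw : φ w = y⟩ : (φ ⁻¹' {y}).Nonempty :=
    nonempty_of_measure_ne_zero (μ := μ) (by simp [hμ])
  have hae : ∀ m : Measure G, [IsProbabilityMeasure m] → m (φ ⁻¹' {y}) = 1 →
      ∀ᵐ z ∂m, z * w⁻¹ ∈ φ.ker := fun m _ hm => by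
    filter_upwards [(mem_ae_iff_prob_eq_one hfiber).2 hm] with z (hz : φ z = y)
    simp [MonoidHom.mem_ker, hz, hw]
  have hkerc : IsClosed (φ.ker : Set G) := by
    rw [MonoidHom.coe_ker]
    exact isClosed_singleton.preimage hφ
  exact Subgroup.eq_of_ae_mul_inv_mem hker hkerc (hae μ hμ) (hae ν hν) hμK hνK

end CosetMeasures

section Fibers

variable {X Y : Type*} [TopologicalSpace X] [MeasurableSpace X] [OpensMeasurableSpace X]
  [TopologicalSpace Y] [T1Space Y] {f : X → Y} {ν : Y → Measure X}
  [∀ y, IsProbabilityMeasure (ν y)]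

theorem measure_preimage_eq_indicator (hf : Continuous f) (hfiber : ∀ y, ν y (f ⁻¹' {y}) = 1)
    (C : Set Y) (y : Y) : ν y (f ⁻¹' C) = C.indicator 1 y := by
  by_cases hy : y ∈ C
  · rw [indicator_of_mem hy, Pi.one_apply]
    exact le_antisymm prob_le_one
      (hfiber y ▸ measure_mono (preimage_mono (singleton_subset_iff.2 hy)))
  · rw [indicator_of_notMem hy]
    refine measure_mono_null (fun z (hz : f z ∈ C) (hzy : f z = y) => hy (hzy ▸ hz)) ?_
    exact (prob_compl_eq_zero_iff (isClosed_singleton.preimage hf).measurableSet).2 (hfiber y)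

variable [MeasurableSpace Y] [BorelSpace Y] {μ₁ : Measure Y} {μ : Measure X}

theorem measure_preimage_eq_of_lintegral (hf : Continuous f) (hfiber : ∀ y, ν y (f ⁻¹' {y}) = 1)
    (hμ : ∀ Z, MeasurableSet Z → μ Z = ∫⁻ y, ν y Z ∂μ₁) {C : Set Y} (hC : MeasurableSet C) :
    μ (f ⁻¹' C) = μ₁ C := by
  simp_rw [hμ _ (hf.measurable hC), measure_preimage_eq_indicator hf hfiber,
    lintegral_indicator_one hC]

end Fibers

section FiberIntegral

variable {G H : Type*} [CommGroup G] [TopologicalSpace G] [IsTopologicalGroup G]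
  [MeasurableSpace G] [BorelSpace G] [CommGroup H] [TopologicalSpace H] [T2Space H]
  {φ : G →* H} {ν : H → Measure G} [∀ x, IsProbabilityMeasure (ν x)]

theorem map_mul_left_eq_of_measure_fiber_eq_one (hφ : Continuous φ)
    (hker : IsCompact (φ.ker : Set G)) (hfiber : ∀ x, ν x (φ ⁻¹' {x}) = 1)
    (hinv : ∀ x, ∀ k ∈ φ.ker, (ν x).map (k * ·) = ν x) (g : G) (x : H) :
    (ν x).map (g * ·) = ν (φ g * x) := by
  have hg : Measurable (g * ·) := measurable_const_mul g
  have := isProbabilityMeasure_map (μ := ν x) hg.aemeasurable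
  refine φ.measure_eq_of_measure_fiber_eq_one hφ hker (y := φ g * x) ?_ (hfiber _)
    (fun k hk => ?_) (hinv _)
  · rw [map_apply hg (isClosed_singleton.preimage hφ).measurableSet, ← hfiber x]
    congr 1
    ext z
    simp
  · have hcomm : (k * ·) ∘ (g * ·) = (g * ·) ∘ (k * ·) := funext fun z => mul_left_comm k g z
    rw [Measure.map_map (measurable_const_mul k) hg, hcomm,
      ← Measure.map_map hg (measurable_const_mul k), hinv x k hk]

variable [MeasurableSpace H] [BorelSpace H] {μ₁ : Measure H} {μ : Measure G}

theorem isMulLeftInvariant_of_lintegral [IsTopologicalGroup H] [μ₁.IsMulLeftInvariant]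
    (hφ : Continuous φ) (hker : IsCompact (φ.ker : Set G)) (hfiber : ∀ x, ν x (φ ⁻¹' {x}) = 1)
    (hinv : ∀ x, ∀ k ∈ φ.ker, (ν x).map (k * ·) = ν x)
    (hμ : ∀ Z, MeasurableSet Z → μ Z = ∫⁻ x, ν x Z ∂μ₁) : μ.IsMulLeftInvariant := by
  refine ⟨fun g => ext fun s hs => ?_⟩
  have hg : Measurable (g * ·) := measurable_const_mul g
  simp_rw [map_apply hg hs, hμ _ (hg hs), hμ s hs, ← map_apply hg hs,
    map_mul_left_eq_of_measure_fiber_eq_one hφ hker hfiber hinv]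
  exact lintegral_mul_left_eq_self (fun y => ν y s) (φ g)

theorem isHaarMeasure_of_lintegral [IsTopologicalGroup H] [WeaklyLocallyCompactSpace H]
    [μ₁.IsHaarMeasure] (hφ : Continuous φ) (hφK : ∀ C, IsCompact C → IsCompact (φ ⁻¹' C))
    (hfiber : ∀ x, ν x (φ ⁻¹' {x}) = 1) (hinv : ∀ x, ∀ k ∈ φ.ker, (ν x).map (k * ·) = ν x)
    (hμ : ∀ Z, MeasurableSet Z → μ Z = ∫⁻ x, ν x Z ∂μ₁) : μ.IsHaarMeasure := by
  have hker : IsCompact (φ.ker : Set G) := by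
    rw [MonoidHom.coe_ker]
    exact hφK _ isCompact_singleton
  have := isMulLeftInvariant_of_lintegral hφ hker hfiber hinv hμ
  obtain ⟨C, hC, hC1⟩ := exists_compact_mem_nhds (1 : H)
  have hμC : μ (φ ⁻¹' C) = μ₁ C := measure_preimage_eq_of_lintegral hφ hfiber hμ hC.measurableSet
  refine isHaarMeasure_of_isCompact_nonempty_interior μ (φ ⁻¹' C) (hφK C hC)
    ⟨1, mem_interior_iff_mem_nhds.2 (hφ.continuousAt (by simpa using hC1))⟩ ?_ ?_
  · exact hμC ▸ (measure_pos_of_mem_nhds μ₁ hC1).ne'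
  · exact hμC ▸ hC.measure_ne_top

end FiberIntegral

/-- If each covering map in a sequence of locally compact abelian topological groups is a
continuous surjective group homomorphism with finite kernel, then the inverse limit `S`
(a subgroup of the product) is a locally compact abelian topological group, and the
fiberwise product measure `μinf` built from a Haar measure `μ1` on `X 0` and the unit-volume
Haar measures `ν x` on the fibers (probability measures on the fibers, invariant under the
fiber group `ker (P∞,0)`) is a Haar measure on the inverse limit. -/
theorem stmt5 (X : ℕ → Type*) [∀ i, CommGroup (X i)] [∀ i, TopologicalSpace (X i)]
    [∀ i, IsTopologicalGroup (X i)] [∀ i, LocallyCompactSpace (X i)] [∀ i, T2Space (X i)]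
    (P : ∀ i : ℕ, X (i + 1) →* X i)
    (hcont : ∀ i, Continuous (P i))
    (hsurj : ∀ i, Function.Surjective (P i))
    (hkerfin : ∀ i, Finite ((P i).ker))
    (hcov : ∀ i, IsCoveringMap (P i))
    (S : Subgroup (∀ i, X i))
    (hS : (S : Set (∀ i, X i)) = {x | ∀ i, P i (x (i + 1)) = x i})
    [MeasurableSpace (X 0)] [BorelSpace (X 0)]
    (μ1 : Measure (X 0)) [μ1.IsHaarMeasure]
    [MeasurableSpace ↥S] [BorelSpace ↥S]
    (ν : X 0 → Measure ↥S) (hprob : ∀ x, IsProbabilityMeasure (ν x))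
    (hfiber : ∀ x : X 0, ν x {z : ↥S | (z : ∀ i, X i) 0 = x} = 1)
    (hνinv : ∀ (x : X 0) (k : ↥S), (k : ∀ i, X i) 0 = 1 →
      Measure.map (fun z : ↥S => k * z) (ν x) = ν x)
    (μinf : Measure ↥S)
    (hμinf : ∀ Z : Set ↥S, MeasurableSet Z → μinf Z = ∫⁻ x, ν x Z ∂μ1) :
    LocallyCompactSpace ↥S ∧ IsTopologicalGroup ↥S ∧ μinf.IsHaarMeasure := by
  let φ : S →* X 0 := (Pi.evalMonoidHom X 0).comp S.subtype
  have hφ : Continuous φ := (continuous_apply 0).comp continuous_subtype_val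
  have hPK (i : ℕ) (C : Set (X i)) (hC : IsCompact C) : IsCompact (P i ⁻¹' C) :=
    (P i).isCompact_preimage_of_isOpenMap (hcont i) (hcov i).isOpenMap (hsurj i)
      (Set.finite_coe_iff.mp (hkerfin i)).isCompact hC
  have hφK (C : Set (X 0)) (hC : IsCompact C) : IsCompact (φ ⁻¹' C) := by
    have hpre : φ ⁻¹' C = Subtype.val ⁻¹' {x | (∀ i, P i (x (i + 1)) = x i) ∧ x 0 ∈ C} := by
      ext z
      have hz : (z : ∀ i, X i) ∈ (S : Set (∀ i, X i)) := z.2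
      rw [hS] at hz
      exact ⟨fun h => ⟨hz, h⟩, And.right⟩
    rw [hpre]
    refine IsInducing.subtypeVal.isCompact_preimage'
      (isCompact_setOf_compatible_apply_zero_mem hcont hPK hC) ?_
    rw [Subtype.range_coe, hS]
    exact fun x hx => hx.1
  have := weaklyLocallyCompactSpace_of_isCompact_preimage hφ hφK
  exact ⟨inferInstance, inferInstance,
    isHaarMeasure_of_lintegral hφ hφK hfiber (fun x k hk => hνinv x k hk) hμinf⟩
end
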